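/- arXiv:1401.8144 — 4 statements merged into one kernel-verified Lean document; each statement's English description precedes it below -/
import Mathlib

section
/- A CPG with all weights at least 2 is convex (supermodular): for all coalitions A, B ⊆ P, v(A ∪ B) + v(A ∩ B) ≥ v(A) + v(B). -/
/-- The characteristic function of a cooperative product game (CPG):
`v(∅) = 0` and `v(C) = ∏ i in C, w i` for nonempty `C`. -/
noncomputable def cpgValue {α : Type*} [DecidableEq α] (w : α → ℝ) (C : Finset α) : ℝ :=
  if C = ∅ then 0 else ∏ i ∈ C, w i

theorem cpg_convex {α : Type*} [DecidableEq α] (w : α → ℝ)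
    (hw : ∀ i, 2 ≤ w i) (A B : Finset α) :
    cpgValue w A + cpgValue w B ≤ cpgValue w (A ∪ B) + cpgValue w (A ∩ B) := by
  have h1 : ∀ S : Finset α, (1:ℝ) ≤ ∏ i ∈ S, w i := by
    intro S
    induction S using Finset.induction with
    | empty => simp
    | insert _ _ h ih =>
      rw [Finset.prod_insert h]
      nlinarith [hw ‹_›]
  have h2 : ∀ S : Finset α, S.Nonempty → (2:ℝ) ≤ ∏ i ∈ S, w i := by
    rintro S ⟨j, hj⟩
    rw [← Finset.mul_prod_erase S w hj]
    nlinarith [h1 (S.erase j), hw j]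
  rcases eq_or_ne A ∅ with hA | hA
  · subst hA; simp [cpgValue]
  rcases eq_or_ne B ∅ with hB | hB
  · subst hB; simp [cpgValue]
  have hAB : A ∪ B ≠ ∅ := by
    intro h
    rw [Finset.union_eq_empty] at h
    tauto
  rcases eq_or_ne (A ∩ B) ∅ with hI | hI
  · have hd : Disjoint A B := Finset.disjoint_iff_inter_eq_empty.mpr hI
    simp only [cpgValue, if_neg hA, if_neg hB, if_neg hAB, if_pos hI]
    rw [Finset.prod_union hd]
    have ha := h2 A (Finset.nonempty_iff_ne_empty.mpr hA)
    have hb := h2 B (Finset.nonempty_iff_ne_empty.mpr hB)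
    nlinarith
  · simp only [cpgValue, if_neg hA, if_neg hB, if_neg hAB, if_neg hI]
    have d1 : Disjoint (A \ B) (A ∩ B) := by
      rw [Finset.disjoint_left]
      intro a ha hb
      simp only [Finset.mem_sdiff, Finset.mem_inter] at ha hb
      tauto
    have d2 : Disjoint (B \ A) (A ∩ B) := by
      rw [Finset.disjoint_left]
      intro a ha hb
      simp only [Finset.mem_sdiff, Finset.mem_inter] at ha hb
      tauto
    have d3 : Disjoint (A \ B) ((B \ A) ∪ (A ∩ B)) := by
      rw [Finset.disjoint_left]
      intro a ha hb
      simp only [Finset.mem_sdiff, Finset.mem_union, Finset.mem_inter] at ha hb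
      tauto
    have pA : ∏ i ∈ A, w i = (∏ i ∈ A \ B, w i) * ∏ i ∈ A ∩ B, w i := by
      rw [← Finset.prod_union d1, Finset.sdiff_union_inter]
    have pB : ∏ i ∈ B, w i = (∏ i ∈ B \ A, w i) * ∏ i ∈ A ∩ B, w i := by
      rw [← Finset.prod_union d2, Finset.inter_comm, Finset.sdiff_union_inter]
    have pU : ∏ i ∈ A ∪ B, w i =
        (∏ i ∈ A \ B, w i) * ((∏ i ∈ B \ A, w i) * ∏ i ∈ A ∩ B, w i) := by
      rw [← Finset.prod_union d2, ← Finset.prod_union d3]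
      congr 1
      ext x
      simp only [Finset.mem_union, Finset.mem_sdiff, Finset.mem_inter]
      tauto
    rw [pA, pB, pU]
    nlinarith [h1 (A \ B), h1 (B \ A), h1 (A ∩ B),
      mul_nonneg (mul_nonneg (sub_nonneg.mpr (h1 (A \ B))) (sub_nonneg.mpr (h1 (B \ A))))
        (le_trans zero_le_one (h1 (A ∩ B)))]
end

section
/- Let π be an ordering of the players of a CPG with all weights at least 2, and let p be the marginal contribution vector of π (p_{x_1} = w_{x_1}, p_{x_i} = (∏_{k<i} w_{x_k})(w_{x_i} - 1) for i ≥ 2). Then p lies in the core: for every coalition C ⊆ P, ∑_{i ∈ C} p_i ≥ v(C), and ∑_{i ∈ P} p_i = v(P). -/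
/-- The marginal contribution at position `k` (indices in ℕ). -/
noncomputable def cpgMarg (W : ℕ → ℝ) (k : ℕ) : ℝ :=
  if k = 0 then W 0 else (∏ j ∈ Finset.range k, W j) * (W k - 1)

lemma cpg_one_le_prod (W : ℕ → ℝ) (hone : ∀ k, (1:ℝ) ≤ W k) (s : Finset ℕ) :
    (1:ℝ) ≤ ∏ k ∈ s, W k := by
  have := Finset.prod_le_prod (s := s) (f := fun _ => (1:ℝ)) (g := W)
    (fun i _ => zero_le_one) (fun i _ => hone i)
  simpa using this

lemma cpg_prod_mono (W : ℕ → ℝ) (hone : ∀ k, (1:ℝ) ≤ W k) {s t : Finset ℕ} (h : s ⊆ t) :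
    ∏ k ∈ s, W k ≤ ∏ k ∈ t, W k := by
  rw [← Finset.prod_sdiff h]
  have h1 : (1:ℝ) ≤ ∏ k ∈ t \ s, W k := cpg_one_le_prod W hone _
  have h0 : (0:ℝ) ≤ ∏ k ∈ s, W k :=
    Finset.prod_nonneg fun i _ => le_trans zero_le_one (hone i)
  nlinarith

set_option maxHeartbeats 1000000 in
lemma cpg_key (W : ℕ → ℝ) (hW : ∀ k, 2 ≤ W k) :
    ∀ D : Finset ℕ, D.Nonempty → ∏ k ∈ D, W k ≤ ∑ k ∈ D, cpgMarg W k := by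
  intro D
  induction D using Finset.strongInduction with
  | _ D IH =>
    intro hD
    have hone : ∀ k, (1:ℝ) ≤ W k := fun k => le_trans one_le_two (hW k)
    set j := D.max' hD with hj
    have hjD : j ∈ D := D.max'_mem hD
    have hsub : D.erase j ⊆ Finset.range j := by
      intro k hk
      rw [Finset.mem_erase] at hk
      exact Finset.mem_range.mpr (lt_of_le_of_ne (D.le_max' k hk.2) hk.1)
    have hrange : ∀ m : ℕ, 1 ≤ m → (2:ℝ) ≤ ∏ i ∈ Finset.range m, W i := by
      intro m hm
      calc (2:ℝ) ≤ W 0 := hW 0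
        _ = ∏ i ∈ Finset.range 1, W i := by simp
        _ ≤ ∏ i ∈ Finset.range m, W i :=
          cpg_prod_mono W hone (Finset.range_subset_range.mpr hm)
    by_cases hsing : D.erase j = ∅
    · have hDj : D = {j} := by
        apply Finset.eq_singleton_iff_unique_mem.mpr
        refine ⟨hjD, fun x hx => ?_⟩
        by_contra hne
        exact absurd (Finset.mem_erase.mpr ⟨hne, hx⟩) (by simp [hsing])
      rw [hDj, Finset.prod_singleton, Finset.sum_singleton]
      unfold cpgMarg
      by_cases hj0 : j = 0
      · simp [hj0]
      · rw [if_neg hj0]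
        have h2 : (2:ℝ) ≤ ∏ i ∈ Finset.range j, W i := hrange j (Nat.one_le_iff_ne_zero.mpr hj0)
        nlinarith [hW j]
    · have hD' : (D.erase j).Nonempty := Finset.nonempty_of_ne_empty hsing
      have hIH := IH (D.erase j) (Finset.erase_ssubset hjD) hD'
      have hj0 : j ≠ 0 := by
        obtain ⟨k, hk⟩ := hD'
        have := Finset.mem_range.mp (hsub hk)
        omega
      have hprodpos : (1:ℝ) ≤ ∏ k ∈ D.erase j, W k := cpg_one_le_prod W hone _
      have hle : ∏ k ∈ D.erase j, W k ≤ ∏ i ∈ Finset.range j, W i :=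
        cpg_prod_mono W hone hsub
      have hsum : ∑ k ∈ D, cpgMarg W k = cpgMarg W j + ∑ k ∈ D.erase j, cpgMarg W k :=
        (Finset.add_sum_erase D _ hjD).symm
      have hprod : ∏ k ∈ D, W k = W j * ∏ k ∈ D.erase j, W k :=
        (Finset.mul_prod_erase D _ hjD).symm
      have hmarg : cpgMarg W j = (∏ i ∈ Finset.range j, W i) * (W j - 1) := by
        unfold cpgMarg; rw [if_neg hj0]
      rw [hsum, hprod, hmarg]
      nlinarith [hW j]

lemma cpg_key_eq (W : ℕ → ℝ) :
    ∀ n : ℕ, n ≠ 0 → ∑ k ∈ Finset.range n, cpgMarg W k = ∏ k ∈ Finset.range n, W k := by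
  intro n hn
  induction n with
  | zero => exact absurd rfl hn
  | succ m IH =>
    by_cases hm : m = 0
    · subst hm; simp [cpgMarg]
    · rw [Finset.sum_range_succ, Finset.prod_range_succ, IH hm]
      have : cpgMarg W m = (∏ j ∈ Finset.range m, W j) * (W m - 1) := by
        unfold cpgMarg; rw [if_neg hm]
      rw [this]; ring

theorem cpg_marginal_vector_in_core {n : ℕ} (w : Fin n → ℝ)
    (hw : ∀ i, 2 ≤ w i) (π : Equiv.Perm (Fin n)) (p : Fin n → ℝ)
    (hp : ∀ j : Fin n,
      p j = if ((π.symm j : Fin n) : ℕ) = 0 then w j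
            else (∏ k ∈ Finset.Iio (π.symm j), w (π k)) * (w j - 1)) :
    (∀ C : Finset (Fin n), cpgValue w C ≤ ∑ i ∈ C, p i) ∧
      (∑ i, p i) = cpgValue w Finset.univ := by
  classical
  set W : ℕ → ℝ := fun k => if h : k < n then w (π ⟨k, h⟩) else 2 with hWdef
  have hW : ∀ k, 2 ≤ W k := by
    intro k
    simp only [hWdef]
    split
    · exact hw _
    · exact le_refl 2
  have hWval : ∀ i : Fin n, W ((π.symm i : Fin n) : ℕ) = w i := by
    intro i
    have hlt : ((π.symm i : Fin n) : ℕ) < n := (π.symm i).isLt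
    simp only [hWdef]
    rw [dif_pos hlt]
    have h1 : (⟨((π.symm i : Fin n) : ℕ), hlt⟩ : Fin n) = π.symm i := Fin.ext rfl
    rw [h1, Equiv.apply_symm_apply]
  have hIio : ∀ m : Fin n, ∏ k ∈ Finset.Iio m, w (π k) = ∏ j ∈ Finset.range (m : ℕ), W j := by
    intro m
    rw [← Nat.Iio_eq_range, ← Fin.map_valEmbedding_Iio, Finset.prod_map]
    apply Finset.prod_congr rfl
    intro k _
    simp only [hWdef, Fin.valEmbedding_apply]
    rw [dif_pos k.isLt]
  have hpm : ∀ i : Fin n, p i = cpgMarg W ((π.symm i : Fin n) : ℕ) := by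
    intro i
    rw [hp i]
    unfold cpgMarg
    by_cases h0 : ((π.symm i : Fin n) : ℕ) = 0
    · rw [if_pos h0, if_pos h0, ← h0, hWval i]
    · rw [if_neg h0, if_neg h0, hIio, hWval]
  set f : Fin n → ℕ := fun i => ((π.symm i : Fin n) : ℕ) with hf
  have hfinj : Function.Injective f := fun a b h => by
    have : π.symm a = π.symm b := Fin.val_injective h
    exact π.symm.injective this
  have hsum : ∀ C : Finset (Fin n), ∑ i ∈ C, p i = ∑ k ∈ C.image f, cpgMarg W k := by
    intro C
    rw [Finset.sum_image (fun a _ b _ h => hfinj h)]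
    exact Finset.sum_congr rfl fun i _ => hpm i
  have hprodC : ∀ C : Finset (Fin n), ∏ i ∈ C, w i = ∏ k ∈ C.image f, W k := by
    intro C
    rw [Finset.prod_image (fun a _ b _ h => hfinj h)]
    exact Finset.prod_congr rfl fun i _ => (hWval i).symm
  constructor
  · intro C
    by_cases hC : C = ∅
    · subst hC; simp [cpgValue]
    · rw [cpgValue, if_neg hC, hsum C, hprodC C]
      exact cpg_key W hW _ (Finset.image_nonempty.mpr (Finset.nonempty_of_ne_empty hC))
  · have himg : (Finset.univ : Finset (Fin n)).image f = Finset.range n := by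
      ext k
      simp only [Finset.mem_image, Finset.mem_univ, true_and, Finset.mem_range, hf]
      constructor
      · rintro ⟨i, rfl⟩; exact (π.symm i).isLt
      · intro hk
        exact ⟨π ⟨k, hk⟩, by rw [Equiv.symm_apply_apply]⟩
    by_cases hn : n = 0
    · subst hn
      have : (Finset.univ : Finset (Fin 0)) = ∅ := rfl
      simp [cpgValue, this]
    · have hU : (Finset.univ : Finset (Fin n)) ≠ ∅ :=
        Finset.nonempty_iff_ne_empty.mp
          ⟨Fin.mk 0 (Nat.pos_of_ne_zero hn), Finset.mem_univ _⟩
      rw [hsum Finset.univ, himg, cpg_key_eq W n hn, cpgValue, if_neg hU]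
      rw [hprodC Finset.univ, himg]
end

section
/- Every CPG with all weights at least 2 has a nonempty core: there exists a payoff vector p : P → ℝ with ∑_{i ∈ P} p_i = v(P) and ∑_{i ∈ C} p_i ≥ v(C) for every coalition C ⊆ P. -/
theorem cpg_core_nonempty {α : Type*} [Fintype α] [DecidableEq α] (w : α → ℝ)
    (hw : ∀ i, 2 ≤ w i) :
    ∃ p : α → ℝ, (∑ i, p i) = cpgValue w Finset.univ ∧
      ∀ C : Finset α, cpgValue w C ≤ ∑ i ∈ C, p i := by
  rcases isEmpty_or_nonempty α with h | h
  · refine ⟨fun _ => 0, ?_, ?_⟩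
    · simp [cpgValue, Finset.univ_eq_empty]
    · intro C
      have : C = ∅ := Finset.eq_empty_of_isEmpty C
      simp [cpgValue, this]
  · set n : ℕ := Fintype.card α with hn
    have hn0 : 0 < n := Fintype.card_pos
    have hnR : (0 : ℝ) < n := by exact_mod_cast hn0
    set V : ℝ := ∏ j, w j with hV
    refine ⟨fun _ => V / n, ?_, ?_⟩
    · have huniv : (Finset.univ : Finset α) ≠ ∅ := by
        simp [Finset.univ_eq_empty_iff]
      rw [cpgValue, if_neg huniv]
      rw [Finset.sum_const, Finset.card_univ, ← hn]
      simp only [nsmul_eq_mul, mul_div_cancel₀ _ hnR.ne', hV]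
    · intro C
      by_cases hC : C = ∅
      · simp [cpgValue, hC]
      · rw [cpgValue, if_neg hC]
        rw [Finset.sum_const, nsmul_eq_mul, ← mul_div_assoc, le_div_iff₀ hnR]
        set k : ℕ := Cᶜ.card with hk
        have hsplit : V = (∏ i ∈ C, w i) * ∏ i ∈ Cᶜ, w i := by
          rw [hV, ← Finset.prod_mul_prod_compl C w]
        have hCpos : (0:ℝ) < ∏ i ∈ C, w i :=
          Finset.prod_pos fun i _ => lt_of_lt_of_le two_pos (hw i)
        have hpow : (2:ℝ) ^ k ≤ ∏ i ∈ Cᶜ, w i := by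
          calc (2:ℝ) ^ k = ∏ _i ∈ Cᶜ, (2:ℝ) := by rw [Finset.prod_const]
            _ ≤ ∏ i ∈ Cᶜ, w i :=
              Finset.prod_le_prod (fun _ _ => by norm_num) (fun i _ => hw i)
        have hcard : n = C.card + k := by
          rw [hk, hn]; rw [Finset.card_compl]; have := Finset.card_le_univ C; omega
        have hC1 : 1 ≤ C.card := Finset.card_pos.mpr (Finset.nonempty_of_ne_empty hC)
        have hnat : n ≤ C.card * 2 ^ k := by
          have h2 : k + 1 ≤ 2 ^ k := Nat.lt_two_pow_self (n := k)
          calc n = C.card + k := hcard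
            _ ≤ C.card * (k + 1) := by nlinarith
            _ ≤ C.card * 2 ^ k := Nat.mul_le_mul_left _ h2
        have hnatR : (n : ℝ) ≤ (C.card : ℝ) * 2 ^ k := by
          exact_mod_cast hnat
        calc (∏ i ∈ C, w i) * n ≤ (∏ i ∈ C, w i) * ((C.card : ℝ) * 2 ^ k) := by
              exact mul_le_mul_of_nonneg_left hnatR hCpos.le
          _ = (C.card : ℝ) * ((∏ i ∈ C, w i) * 2 ^ k) := by ring
          _ ≤ (C.card : ℝ) * V := by
              rw [hsplit]
              apply mul_le_mul_of_nonneg_left _ (by positivity)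
              exact mul_le_mul_of_nonneg_left hpow hCpos.le
end

section
/- Any convex (supermodular) cooperative game v on a finite player set P with v(∅) = 0 has a nonempty core; moreover, for any ordering π of the players, the marginal contribution vector of π lies in the core. -/
theorem convex_game_core_nonempty {α : Type*} [Fintype α] [DecidableEq α]
    (v : Finset α → ℝ) (hv0 : v ∅ = 0)
    (hconv : ∀ A B : Finset α, v A + v B ≤ v (A ∪ B) + v (A ∩ B))
    (π : Fin (Fintype.card α) ≃ α) (p : α → ℝ)
    (hp : ∀ a : α, p a = v ((Finset.Iic (π.symm a)).image π) -
                          v ((Finset.Iio (π.symm a)).image π)) :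
    (∑ i, p i) = v Finset.univ ∧ ∀ C : Finset α, v C ≤ ∑ i ∈ C, p i := by
  set S : ℕ → Finset α :=
    fun k => (Finset.univ.filter fun i : Fin (Fintype.card α) => (i : ℕ) < k).image π with hSdef
  have hS0 : S 0 = ∅ := by
    simp only [hSdef, Nat.not_lt_zero, Finset.filter_false, Finset.image_empty]
  have hSn : S (Fintype.card α) = Finset.univ := by
    have h1 : (Finset.univ.filter fun i : Fin (Fintype.card α) => (i : ℕ) < Fintype.card α) = Finset.univ := by
      apply Finset.filter_true_of_mem; intro i _; exact i.isLt
    simp only [hSdef, h1]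
    ext a
    simp only [Finset.mem_image, Finset.mem_univ, iff_true]
    exact ⟨π.symm a, trivial, π.apply_symm_apply a⟩
  have hIic : ∀ i : Fin (Fintype.card α), (Finset.Iic i).image π = S ((i : ℕ) + 1) := by
    intro i
    simp only [hSdef]
    congr 1
    ext j
    simp only [Finset.mem_Iic, Finset.mem_filter, Finset.mem_univ, true_and, Fin.le_def,
      Nat.lt_succ_iff]
  have hIio : ∀ i : Fin (Fintype.card α), (Finset.Iio i).image π = S (i : ℕ) := by
    intro i
    simp only [hSdef]
    congr 1
    ext j
    simp only [Finset.mem_Iio, Finset.mem_filter, Finset.mem_univ, true_and, Fin.lt_def]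
  have hp' : ∀ i : Fin (Fintype.card α), p (π i) = v (S ((i : ℕ) + 1)) - v (S (i : ℕ)) := by
    intro i
    rw [hp, Equiv.symm_apply_apply, hIic, hIio]
  have hstep : ∀ i : Fin (Fintype.card α), S ((i : ℕ) + 1) = insert (π i) (S (i : ℕ)) := by
    intro i
    simp only [hSdef]
    have h1 : (Finset.univ.filter fun j : Fin (Fintype.card α) => (j : ℕ) < (i : ℕ) + 1) =
        insert i (Finset.univ.filter fun j : Fin (Fintype.card α) => (j : ℕ) < (i : ℕ)) := by
      ext j
      simp only [Finset.mem_filter, Finset.mem_univ, true_and, Finset.mem_insert, Fin.ext_iff]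
      omega
    rw [h1, Finset.image_insert]
  have hsub : ∀ i : Fin (Fintype.card α), S (i : ℕ) ⊆ S ((i : ℕ) + 1) := by
    intro i; rw [hstep i]; exact Finset.subset_insert _ _
  constructor
  · calc ∑ a, p a = ∑ i : Fin (Fintype.card α), p (π i) := (Equiv.sum_comp π p).symm
    _ = ∑ i : Fin (Fintype.card α), (v (S ((i : ℕ) + 1)) - v (S (i : ℕ))) := by
        exact Finset.sum_congr rfl fun i _ => hp' i
    _ = ∑ k ∈ Finset.range (Fintype.card α), (v (S (k + 1)) - v (S k)) :=
        Fin.sum_univ_eq_sum_range (fun k => v (S (k + 1)) - v (S k)) (Fintype.card α)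
    _ = v (S (Fintype.card α)) - v (S 0) := Finset.sum_range_sub (fun k => v (S k)) (Fintype.card α)
    _ = v Finset.univ := by rw [hSn, hS0, hv0, sub_zero]
  · intro C
    have key : ∀ i : Fin (Fintype.card α),
        v (C ∩ S ((i : ℕ) + 1)) - v (C ∩ S (i : ℕ)) ≤
          (if π i ∈ C then p (π i) else 0) := by
      intro i
      by_cases hc : π i ∈ C
      · rw [if_pos hc, hp' i]
        have h := hconv (C ∩ S ((i : ℕ) + 1)) (S (i : ℕ))
        have hU : (C ∩ S ((i : ℕ) + 1)) ∪ S (i : ℕ) = S ((i : ℕ) + 1) := by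
          rw [hstep i]
          ext x
          simp only [Finset.mem_union, Finset.mem_inter, Finset.mem_insert]
          constructor
          · rintro (⟨_, h2⟩ | h2)
            · exact h2
            · exact Or.inr h2
          · rintro (rfl | h2)
            · exact Or.inl ⟨hc, Or.inl rfl⟩
            · exact Or.inr h2
        have hI : (C ∩ S ((i : ℕ) + 1)) ∩ S (i : ℕ) = C ∩ S (i : ℕ) := by
          ext x
          simp only [Finset.mem_inter]
          exact ⟨fun ⟨⟨h1, _⟩, h3⟩ => ⟨h1, h3⟩, fun ⟨h1, h3⟩ => ⟨⟨h1, hsub i h3⟩, h3⟩⟩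
        rw [hU, hI] at h
        linarith
      · rw [if_neg hc]
        have : C ∩ S ((i : ℕ) + 1) = C ∩ S (i : ℕ) := by
          rw [hstep i, Finset.inter_insert_of_notMem hc]
        rw [this]
        simp
    have hsum : ∑ i : Fin (Fintype.card α), (v (C ∩ S ((i : ℕ) + 1)) - v (C ∩ S (i : ℕ))) = v C := by
      rw [Fin.sum_univ_eq_sum_range (fun k => v (C ∩ S (k + 1)) - v (C ∩ S k)) (Fintype.card α),
        Finset.sum_range_sub (fun k => v (C ∩ S k)) (Fintype.card α), hSn, hS0,
        Finset.inter_univ, Finset.inter_empty, hv0, sub_zero]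
    calc v C = ∑ i : Fin (Fintype.card α), (v (C ∩ S ((i : ℕ) + 1)) - v (C ∩ S (i : ℕ))) := hsum.symm
    _ ≤ ∑ i : Fin (Fintype.card α), (if π i ∈ C then p (π i) else 0) :=
        Finset.sum_le_sum fun i _ => key i
    _ = ∑ a, (if a ∈ C then p a else 0) := Equiv.sum_comp π (fun a => if a ∈ C then p a else 0)
    _ = ∑ a ∈ C, p a := by rw [Finset.sum_ite_mem, Finset.univ_inter]
end
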